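/- Let m > 0, B : ℝ → ℝ ∪ {∞} with B(p) = b p² for some b ∈ (ℝ∖{0}) ∪ {∞}. Define for t ∈ ℝ the operator U(t) on functions f : ℝ² → ℂ by (U(t)f)(q,p) = f(q − pt/m, p) − [θ(tqp)θ(|pt|/m − |q|)/(1 + sgn(t)·2i|p|/(mB(p)))]·(f(q − pt/m, p) − f(−q + pt/m, −p)), where θ is the Heaviside function and 1/∞ := 0. Then for all s, t of the same sign (s·t ≥ 0), U(s)U(t) = U(s+t) on L²(ℝ²), and each U(t) is an isometry of L²(ℝ²). -/

import Mathlib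

/-!
The free flow `(q, p) ↦ (q - p t / m, p)` carries `(q, p)` across `q = 0` at time `τ = m q / p`,
and the factor `θ(t q p) θ(|p t| / m - |q|)` says exactly that `τ` lies strictly between `0`
and `t`. On that set `U(t)` mixes `f` and `f(-·)` along the flow with a coefficient
`c = 1 / (1 + i r)`, `r` real, so `1 - 2c` is unimodular and `(f, f(-·)) ↦ (U f, U f(-·))` is
pointwise unitary; since the shear and `z ↦ -z` preserve Lebesgue measure, `U(t)` is an isometry.
For `s`, `t` of the same sign a trajectory crosses during `(0, s + t)` iff it crosses during
exactly one of `(0, s)` and `(s, s + t)` (off the null set `τ = s`), which is the identity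
`c_s + c_t - 2 c_s c_t = c_{s+t}` behind `U(s) U(t) = U(s + t)`.
-/

open MeasureTheory

/-- Heaviside step function: `1` for positive arguments, `0` otherwise. -/
noncomputable def heaviside (x : ℝ) : ℝ := if 0 < x then 1 else 0

/-- `1/B(p)` for `B(p) = b p²`, with `b ∈ (ℝ∖{0}) ∪ {∞}` (`none` encodes `∞`, `1/∞ := 0`). -/
noncomputable def invB : Option ℝ → ℝ → ℝ
  | some b, p => 1 / (b * p ^ 2)
  | none, _ => 0

/-- The classical evolution group `e^{-itL_B}` of the singularly perturbed Liouville operator. -/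
noncomputable def Ucl (m : ℝ) (b : Option ℝ) (t : ℝ) (f : ℝ × ℝ → ℂ) : ℝ × ℝ → ℂ :=
  fun z =>
    f (z.1 - z.2 * t / m, z.2)
      - (((heaviside (t * z.1 * z.2) * heaviside (|z.2 * t| / m - |z.1|) : ℝ) : ℂ)
            / (1 + (Real.sign t : ℂ) * (2 * Complex.I * ((|z.2| : ℝ) : ℂ)
                * ((invB b z.2 : ℝ) : ℂ)) / (m : ℂ)))
          * (f (z.1 - z.2 * t / m, z.2) - f (-z.1 + z.2 * t / m, -z.2))

lemma mem_uIoo_zero_iff {t x : ℝ} : x ∈ Set.uIoo 0 t ↔ 0 < t * x ∧ |x| < |t| := by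
  rcases le_total 0 t with ht | ht <;> rcases le_total 0 x with hx | hx <;>
    simp only [Set.uIoo_of_le, Set.uIoo_of_ge, abs_of_nonneg, abs_of_nonpos, Set.mem_Ioo, *] <;>
    constructor <;> intro h <;> constructor <;> nlinarith [h.1, h.2]

lemma mem_uIoo_zero_add_iff {s t x : ℝ} (hst : 0 ≤ s * t) (hx : x ≠ s) :
    x ∈ Set.uIoo 0 (s + t) ↔ x ∈ Set.uIoo 0 s ∨ x - s ∈ Set.uIoo 0 t := by
  rcases mul_nonneg_iff.1 hst with ⟨hs, ht⟩ | ⟨hs, ht⟩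
  · simp only [Set.uIoo_of_le, hs, ht, add_nonneg, Set.mem_Ioo]
    grind
  · simp only [Set.uIoo_of_ge, hs, ht, add_nonpos, Set.mem_Ioo]
    grind

lemma sub_notMem_uIoo_zero_of_mem {s t x : ℝ} (hst : 0 ≤ s * t) (hx : x ∈ Set.uIoo 0 s) :
    x - s ∉ Set.uIoo 0 t := by
  rcases mul_nonneg_iff.1 hst with ⟨hs, ht⟩ | ⟨hs, ht⟩ <;>
    simp only [Set.uIoo_of_le, Set.uIoo_of_ge, hs, ht, Set.mem_Ioo] at hx ⊢ <;>
    intro h <;> linarith [h.1, h.2]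

lemma sign_add_of_mul_nonneg {s t : ℝ} (hs : s ≠ 0) (hst : 0 ≤ s * t) :
    Real.sign (s + t) = Real.sign s := by
  rcases hs.lt_or_gt with hs | hs
  · have : t ≤ 0 := by nlinarith
    rw [Real.sign_of_neg hs, Real.sign_of_neg (by linarith)]
  · have : 0 ≤ t := by nlinarith
    rw [Real.sign_of_pos hs, Real.sign_of_pos (by linarith)]

lemma norm_one_sub_two_mul_inv_one_add_mul_I (r : ℝ) :
    ‖1 - 2 * (1 + r * Complex.I)⁻¹‖ = 1 := by
  have hne : (1 : ℂ) + r * Complex.I ≠ 0 := by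
    intro h
    simpa using congrArg Complex.re h
  have h : 1 - 2 * (1 + r * Complex.I)⁻¹
      = ((-1 : ℝ) + r * Complex.I) / ((1 : ℝ) + r * Complex.I) := by
    push_cast
    rw [eq_div_iff hne, sub_mul, mul_assoc, inv_mul_cancel₀ hne]
    ring
  rw [h, norm_div, Complex.norm_add_mul_I, Complex.norm_add_mul_I]
  norm_num
  positivity

/-- The mixing `(P, Q) ↦ (P - c (P - Q), Q - c (Q - P))` has eigenvalues `1` and `1 - 2c`. -/
lemma norm_sq_add_norm_sq_of_norm_one_sub_two_mul {E : Type*} [NormedAddCommGroup E]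
    [InnerProductSpace ℂ E] {c : ℂ} (hc : ‖1 - 2 * c‖ = 1) (P Q : E) :
    ‖P - c • (P - Q)‖ ^ 2 + ‖Q - c • (Q - P)‖ ^ 2 = ‖P‖ ^ 2 + ‖Q‖ ^ 2 := by
  set u : E := (2 : ℂ)⁻¹ • (P + Q)
  set v : E := (2 : ℂ)⁻¹ • (P - Q)
  have parallelogram : ∀ w : ℂ, ‖w‖ = 1 →
      ‖u + w • v‖ ^ 2 + ‖u - w • v‖ ^ 2 = 2 * (‖u‖ ^ 2 + ‖v‖ ^ 2) := by
    intro w hw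
    rw [parallelogram_law_with_norm ℂ, norm_smul w v, hw, one_mul]
  have hP : P - c • (P - Q) = u + (1 - 2 * c) • v := by module
  have hQ : Q - c • (Q - P) = u - (1 - 2 * c) • v := by module
  have hP' : P = u + (1 : ℂ) • v := by module
  have hQ' : Q = u - (1 : ℂ) • v := by module
  rw [hP, hQ, parallelogram _ hc]
  conv_rhs => rw [hP', hQ']
  rw [parallelogram _ norm_one]

section NegInvariant

variable {G : Type*} [MeasurableSpace G] [InvolutiveNeg G] [MeasurableNeg G] {μ : Measure G}
  [μ.IsNegInvariant]

lemma two_mul_lintegral_enorm_sq {E : Type*} [NormedAddCommGroup E] {g : G → E}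
    (hg : AEStronglyMeasurable g μ) :
    2 * ∫⁻ x, ‖g x‖ₑ ^ 2 ∂μ = ∫⁻ x, ENNReal.ofReal (‖g x‖ ^ 2 + ‖g (-x)‖ ^ 2) ∂μ := by
  rw [two_mul]
  conv_lhs => enter [2]; rw [← lintegral_neg_eq_self]
  rw [← lintegral_add_left' (hg.enorm.pow_const 2)]
  congr 1 with x
  rw [ENNReal.ofReal_add (by positivity) (by positivity), ENNReal.ofReal_pow (norm_nonneg _),
    ENNReal.ofReal_pow (norm_nonneg _), ofReal_norm, ofReal_norm]

lemma eLpNorm_two_eq_of_norm_sq_add_norm_sq_neg {E F : Type*} [NormedAddCommGroup E]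
    [NormedAddCommGroup F] {g : G → E} {h : G → F}
    (hg : AEStronglyMeasurable g μ) (hh : AEStronglyMeasurable h μ)
    (hgh : ∀ x, ‖g x‖ ^ 2 + ‖g (-x)‖ ^ 2 = ‖h x‖ ^ 2 + ‖h (-x)‖ ^ 2) :
    eLpNorm g 2 μ = eLpNorm h 2 μ := by
  have key : ∫⁻ x, ‖g x‖ₑ ^ 2 ∂μ = ∫⁻ x, ‖h x‖ₑ ^ 2 ∂μ := by
    rw [← ENNReal.mul_right_inj two_ne_zero ENNReal.ofNat_ne_top, two_mul_lintegral_enorm_sq hg,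
      two_mul_lintegral_enorm_sq hh]
    simp only [hgh]
  simp only [eLpNorm_eq_lintegral_rpow_enorm_toReal two_ne_zero ENNReal.ofNat_ne_top,
    ENNReal.toReal_ofNat, ENNReal.rpow_two, key]

end NegInvariant

noncomputable def freeFlow (m t : ℝ) (z : ℝ × ℝ) : ℝ × ℝ := (z.1 - z.2 * t / m, z.2)

lemma freeFlow_neg (m t : ℝ) (z : ℝ × ℝ) : freeFlow m t (-z) = -freeFlow m t z := by
  simp only [freeFlow, Prod.fst_neg, Prod.snd_neg, Prod.neg_mk]
  ring_nf

lemma freeFlow_freeFlow (m s t : ℝ) (z : ℝ × ℝ) :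
    freeFlow m t (freeFlow m s z) = freeFlow m (s + t) z := by
  simp only [freeFlow]
  ring_nf

lemma crossingTime_freeFlow {m : ℝ} (hm : m ≠ 0) (s : ℝ) {z : ℝ × ℝ} (hp : z.2 ≠ 0) :
    m * (freeFlow m s z).1 / (freeFlow m s z).2 = m * z.1 / z.2 - s := by
  simp only [freeFlow]
  field_simp

lemma crossing_iff {m t q p : ℝ} (hm : 0 < m) (hp : p ≠ 0) :
    (0 < t * q * p ∧ |q| < |p * t| / m) ↔ m * q / p ∈ Set.uIoo 0 t := by
  obtain ⟨x, rfl⟩ : ∃ x, q = x * p / m := ⟨m * q / p, by field_simp⟩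
  have hx : m * (x * p / m) / p = x := by field_simp
  have hpos : t * (x * p / m) * p = t * x * (p ^ 2 / m) := by ring
  have habs : |x * p / m| = |x| * (|p| / m) := by rw [abs_div, abs_mul, abs_of_pos hm]; ring
  have habs' : |p * t| / m = |t| * (|p| / m) := by rw [abs_mul]; ring
  rw [hx, mem_uIoo_zero_iff, hpos, habs, habs', mul_pos_iff_of_pos_right (by positivity),
    mul_lt_mul_iff_of_pos_right (by positivity)]

lemma measurePreserving_freeFlow (m t : ℝ) : MeasurePreserving (freeFlow m t) := by
  have shear : MeasurePreserving (fun z : ℝ × ℝ => (z.1, z.2 - z.1 * t / m))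
      (volume.prod volume) (volume.prod volume) :=
    (MeasurePreserving.id volume).skew_product (g := fun p q => q - p * t / m) (by fun_prop)
      (.of_forall fun p => map_sub_right_eq_self volume (p * t / m))
  exact (Measure.measurePreserving_swap.comp shear).comp Measure.measurePreserving_swap

lemma ae_snd_ne_zero : ∀ᵐ z : ℝ × ℝ, z.2 ≠ 0 :=
  Measure.quasiMeasurePreserving_snd.ae (measure_eq_zero_iff_ae_notMem.1 (measure_singleton 0))

lemma ae_fst_freeFlow_ne_zero (m t : ℝ) : ∀ᵐ z : ℝ × ℝ, (freeFlow m t z).1 ≠ 0 :=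
  (measurePreserving_freeFlow m t).quasiMeasurePreserving.ae <|
    Measure.quasiMeasurePreserving_fst.ae (measure_eq_zero_iff_ae_notMem.1 (measure_singleton 0))

lemma invB_neg (b : Option ℝ) (p : ℝ) : invB b (-p) = invB b p := by
  cases b <;> simp [invB]

lemma measurable_invB (b : Option ℝ) : Measurable (invB b) := by
  cases b <;> unfold invB <;> fun_prop

noncomputable def reflectionAmp (m : ℝ) (b : Option ℝ) (σ p : ℝ) : ℂ :=
  (1 + ((σ * (2 * |p| * invB b p) / m : ℝ) : ℂ) * Complex.I)⁻¹

noncomputable def reflectionCoeff (m : ℝ) (b : Option ℝ) (t : ℝ) (z : ℝ × ℝ) : ℂ :=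
  if 0 < t * z.1 * z.2 ∧ |z.1| < |z.2 * t| / m then reflectionAmp m b (Real.sign t) z.2 else 0

lemma heaviside_mul_heaviside (x y : ℝ) :
    heaviside x * heaviside y = if 0 < x ∧ 0 < y then 1 else 0 := by
  unfold heaviside
  split_ifs <;> simp_all

lemma Ucl_apply (m : ℝ) (b : Option ℝ) (t : ℝ) (f : ℝ × ℝ → ℂ) (z : ℝ × ℝ) :
    Ucl m b t f z = f (freeFlow m t z)
      - reflectionCoeff m b t z * (f (freeFlow m t z) - f (-freeFlow m t z)) := by
  have hneg : -freeFlow m t z = (-z.1 + z.2 * t / m, -z.2) := by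
    rw [freeFlow, Prod.neg_mk, neg_sub', sub_neg_eq_add]
  rw [Ucl, reflectionCoeff, reflectionAmp, hneg, freeFlow, heaviside_mul_heaviside]
  simp only [sub_pos]
  split_ifs <;> push_cast <;> ring

lemma measurable_reflectionCoeff (m : ℝ) (b : Option ℝ) (t : ℝ) :
    Measurable (reflectionCoeff m b t) := by
  refine Measurable.ite (measurableSet_setOfPred.2 (by fun_prop)) ?_ measurable_const
  have := measurable_invB b
  unfold reflectionAmp
  fun_prop

lemma reflectionCoeff_neg (m : ℝ) (b : Option ℝ) (t : ℝ) (z : ℝ × ℝ) :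
    reflectionCoeff m b t (-z) = reflectionCoeff m b t z := by
  simp only [reflectionCoeff, reflectionAmp, Prod.fst_neg, Prod.snd_neg, mul_neg, neg_mul,
    neg_neg, abs_neg, invB_neg]

lemma norm_one_sub_two_mul_reflectionCoeff (m : ℝ) (b : Option ℝ) (t : ℝ) (z : ℝ × ℝ) :
    ‖1 - 2 * reflectionCoeff m b t z‖ = 1 := by
  unfold reflectionCoeff
  split_ifs
  · exact norm_one_sub_two_mul_inv_one_add_mul_I _
  · simp

open Classical in
lemma reflectionCoeff_of_ne_zero {m : ℝ} (hm : 0 < m) (b : Option ℝ) (t : ℝ) {z : ℝ × ℝ}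
    (hp : z.2 ≠ 0) :
    reflectionCoeff m b t z =
      if m * z.1 / z.2 ∈ Set.uIoo 0 t then reflectionAmp m b (Real.sign t) z.2 else 0 := by
  simp only [reflectionCoeff, crossing_iff hm hp]

lemma reflectionCoeff_add {m : ℝ} (hm : 0 < m) (b : Option ℝ) {s t : ℝ} (hst : 0 ≤ s * t)
    {z : ℝ × ℝ} (hp : z.2 ≠ 0) (hs : (freeFlow m s z).1 ≠ 0) :
    reflectionCoeff m b s z + reflectionCoeff m b t (freeFlow m s z)
        - 2 * reflectionCoeff m b s z * reflectionCoeff m b t (freeFlow m s z)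
      = reflectionCoeff m b (s + t) z := by
  have hτ : m * z.1 / z.2 ≠ s := by
    contrapose! hs
    simp only [freeFlow, ← hs]
    field_simp
    ring
  rw [reflectionCoeff_of_ne_zero hm b s hp,
    reflectionCoeff_of_ne_zero hm b t (z := freeFlow m s z) hp,
    reflectionCoeff_of_ne_zero hm b (s + t) hp, crossingTime_freeFlow hm.ne' s hp,
    mem_uIoo_zero_add_iff hst hτ]
  by_cases hA : m * z.1 / z.2 ∈ Set.uIoo 0 s
  · have hs0 : s ≠ 0 := by rintro rfl; simp at hA
    simp only [hA, sub_notMem_uIoo_zero_of_mem hst hA, true_or, if_true, if_false,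
      sign_add_of_mul_nonneg hs0 hst, freeFlow]
    ring
  · by_cases hB : m * z.1 / z.2 - s ∈ Set.uIoo 0 t
    · have ht0 : t ≠ 0 := by rintro rfl; simp at hB
      have hsign := sign_add_of_mul_nonneg ht0 (mul_comm s t ▸ hst)
      rw [add_comm] at hsign
      simp only [hA, hB, or_true, if_true, if_false, hsign, freeFlow]
      ring
    · simp [hA, hB]

lemma Ucl_Ucl_apply {m : ℝ} (hm : 0 < m) (b : Option ℝ) {s t : ℝ} (hst : 0 ≤ s * t)
    (f : ℝ × ℝ → ℂ) {z : ℝ × ℝ} (hp : z.2 ≠ 0) (hs : (freeFlow m s z).1 ≠ 0) :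
    Ucl m b s (Ucl m b t f) z = Ucl m b (s + t) f z := by
  simp only [Ucl_apply, freeFlow_neg, reflectionCoeff_neg, freeFlow_freeFlow, neg_neg]
  linear_combination (f (-freeFlow m (s + t) z) - f (freeFlow m (s + t) z)) *
    reflectionCoeff_add hm b hst hp hs

lemma norm_sq_Ucl_add_norm_sq_Ucl_neg (m : ℝ) (b : Option ℝ) (t : ℝ) (f : ℝ × ℝ → ℂ)
    (z : ℝ × ℝ) :
    ‖Ucl m b t f z‖ ^ 2 + ‖Ucl m b t f (-z)‖ ^ 2
      = ‖f (freeFlow m t z)‖ ^ 2 + ‖f (freeFlow m t (-z))‖ ^ 2 := by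
  simp only [Ucl_apply, freeFlow_neg, reflectionCoeff_neg, neg_neg]
  exact norm_sq_add_norm_sq_of_norm_one_sub_two_mul
    (norm_one_sub_two_mul_reflectionCoeff m b t z) _ _

lemma aestronglyMeasurable_Ucl (m : ℝ) (b : Option ℝ) (t : ℝ) {f : ℝ × ℝ → ℂ}
    (hf : AEStronglyMeasurable f) : AEStronglyMeasurable (Ucl m b t f) := by
  have hφ := measurePreserving_freeFlow m t
  have hfφ := hf.comp_measurePreserving hφ
  have hfφneg := hf.comp_measurePreserving ((Measure.measurePreserving_neg volume).comp hφ)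
  rw [show Ucl m b t f = _ from funext (Ucl_apply m b t f)]
  exact hfφ.sub ((measurable_reflectionCoeff m b t).aestronglyMeasurable.mul (hfφ.sub hfφneg))

theorem stmt12_general (m : ℝ) (hm : 0 < m) (b : Option ℝ) :
    (∀ s t : ℝ, 0 ≤ s * t → ∀ f : ℝ × ℝ → ℂ, MemLp f 2 volume →
        Ucl m b s (Ucl m b t f) =ᵐ[volume] Ucl m b (s + t) f) ∧
    (∀ t : ℝ, ∀ f : ℝ × ℝ → ℂ, MemLp f 2 volume →
        eLpNorm (Ucl m b t f) 2 volume = eLpNorm f 2 volume) := by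
  refine ⟨fun s t hst f _ => ?_, fun t f hf => ?_⟩
  · filter_upwards [ae_snd_ne_zero, ae_fst_freeFlow_ne_zero m s] with z hp hs
    exact Ucl_Ucl_apply hm b hst f hp hs
  · have hφ := measurePreserving_freeFlow m t
    calc eLpNorm (Ucl m b t f) 2 volume = eLpNorm (f ∘ freeFlow m t) 2 volume :=
          eLpNorm_two_eq_of_norm_sq_add_norm_sq_neg (aestronglyMeasurable_Ucl m b t hf.1)
            (hf.1.comp_measurePreserving hφ) (norm_sq_Ucl_add_norm_sq_Ucl_neg m b t f)
      _ = eLpNorm f 2 volume := eLpNorm_comp_measurePreserving hf.1 hφ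

theorem stmt12 (m : ℝ) (hm : 0 < m) (b : Option ℝ) (hb : ∀ r : ℝ, b = some r → r ≠ 0) :
    (∀ s t : ℝ, 0 ≤ s * t → ∀ f : ℝ × ℝ → ℂ, MemLp f 2 volume →
        Ucl m b s (Ucl m b t f) =ᵐ[volume] Ucl m b (s + t) f) ∧
    (∀ t : ℝ, ∀ f : ℝ × ℝ → ℂ, MemLp f 2 volume →
        eLpNorm (Ucl m b t f) 2 volume = eLpNorm f 2 volume) :=
  stmt12_general m hm b
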